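/- There is a unique Lie algebra morphism 𝔊 → 𝔱_{1,n} over k determined by X_i ↦ x_i (1 ≤ i ≤ n), Y_i ↦ y_i (1 ≤ i ≤ n), and T_{ij}^α ↦ −(ad x_i)^α(t_{ij}) for 1 ≤ i < j ≤ n and α ≥ 0. -/

import Mathlib

/-! The elliptic braid Lie algebra `𝔱_{1,n}` presented by generators and relations. -/

noncomputable section

/-- Generators of `𝔱_{1,n}`: `x i`, `y i` for `i ∈ [n]` and `t i j` for `i ≠ j`. -/
inductive TGen (n : ℕ) : Type
  | x : Fin n → TGen n
  | y : Fin n → TGen n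
  | t : (i j : Fin n) → i ≠ j → TGen n

variable (k : Type) [Field k] [CharZero k] (n : ℕ)

/-- The free Lie algebra on the generators of `𝔱_{1,n}`. -/
abbrev FT : Type := FreeLieAlgebra k (TGen n)

/-- The generator `x i` in the free Lie algebra. -/
def fx (i : Fin n) : FT k n := FreeLieAlgebra.of k (TGen.x i)

/-- The generator `y i` in the free Lie algebra. -/
def fy (i : Fin n) : FT k n := FreeLieAlgebra.of k (TGen.y i)

/-- The generator `t i j` (for `i ≠ j`) in the free Lie algebra. -/
def ft (i j : Fin n) (h : i ≠ j) : FT k n := FreeLieAlgebra.of k (TGen.t i j h)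

/-- The defining relations of `𝔱_{1,n}`. -/
inductive TRel : FT k n → Prop
  | xx (i j : Fin n) : TRel ⁅fx k n i, fx k n j⁆
  | yy (i j : Fin n) : TRel ⁅fy k n i, fy k n j⁆
  | xy (i j : Fin n) (h : i ≠ j) : TRel (⁅fx k n i, fy k n j⁆ - ft k n i j h)
  | xyDiag (i : Fin n) :
      TRel (⁅fx k n i, fy k n i⁆ + ∑ j : Fin n, if h : i ≠ j then ft k n i j h else 0)
  | xt (i j l : Fin n) (h : i ≠ j) (h1 : l ≠ i) (h2 : l ≠ j) :
      TRel ⁅fx k n l, ft k n i j h⁆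
  | yt (i j l : Fin n) (h : i ≠ j) (h1 : l ≠ i) (h2 : l ≠ j) :
      TRel ⁅fy k n l, ft k n i j h⁆
  | xxt (i j : Fin n) (h : i ≠ j) : TRel ⁅fx k n i + fx k n j, ft k n i j h⁆
  | yyt (i j : Fin n) (h : i ≠ j) : TRel ⁅fy k n i + fy k n j, ft k n i j h⁆
  | tsymm (i j : Fin n) (h : i ≠ j) : TRel (ft k n i j h - ft k n j i h.symm)

/-- The Lie ideal of relations of `𝔱_{1,n}`. -/
abbrev tIdeal : LieIdeal k (FT k n) :=
  LieSubmodule.lieSpan k (FT k n) {a | TRel k n a}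

/-- The Lie algebra `𝔱_{1,n}`. -/
abbrev T1 : Type := FT k n ⧸ tIdeal k n

/-- The generator `x i` of `𝔱_{1,n}`. -/
def tx (i : Fin n) : T1 k n := LieSubmodule.Quotient.mk (N := tIdeal k n) (fx k n i)

/-- The generator `y i` of `𝔱_{1,n}`. -/
def ty (i : Fin n) : T1 k n := LieSubmodule.Quotient.mk (N := tIdeal k n) (fy k n i)

/-- The generator `t i j` (for `i ≠ j`) of `𝔱_{1,n}`. -/
def tt (i j : Fin n) (h : i ≠ j) : T1 k n :=
  LieSubmodule.Quotient.mk (N := tIdeal k n) (ft k n i j h)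

/-- The adjoint operator `ad x : 𝔱_{1,n} → 𝔱_{1,n}`. -/
def adT (v : T1 k n) : Module.End k (T1 k n) := LieAlgebra.ad k (T1 k n) v

/-- Generators of `𝔊`: `X i`, `Y i` for `i ∈ [n]`, and `T i j α` for `i < j`, `α ≥ 0`. -/
inductive GGen (n : ℕ) : Type
  | X : Fin n → GGen n
  | Y : Fin n → GGen n
  | T : (i j : Fin n) → i < j → ℕ → GGen n

/-- The free Lie algebra on the generators of `𝔊`. -/
abbrev FG : Type := FreeLieAlgebra k (GGen n)

/-- The generator `X i` in the free Lie algebra. -/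
def gX (i : Fin n) : FG k n := FreeLieAlgebra.of k (GGen.X i)

/-- The generator `Y i` in the free Lie algebra. -/
def gY (i : Fin n) : FG k n := FreeLieAlgebra.of k (GGen.Y i)

/-- The generator `T i j α` (for `i < j`) in the free Lie algebra. -/
def gT (i j : Fin n) (h : i < j) (α : ℕ) : FG k n :=
  FreeLieAlgebra.of k (GGen.T i j h α)

/-- The defining relations of `𝔊`.  Sums `Σ_{γ+δ=α+β}` are written as sums over
`γ ∈ {0,…,α+β}` with `δ = α+β−γ`; sums `Σ_{γ+δ=α−1}` as sums over `γ ∈ {0,…,α−1}`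
with `δ = α−1−γ` (empty for `α = 0`); `C(a,b)` is `Nat.choose a b` (zero if `b > a`). -/
inductive GRel : FG k n → Prop
  | XX (i j : Fin n) : GRel ⁅gX k n i, gX k n j⁆
  | YY (i j : Fin n) : GRel ⁅gY k n i, gY k n j⁆
  | XYdiag (i : Fin n) :
      GRel (⁅gX k n i, gY k n i⁆
        - (∑ j : Fin n, if h : i < j then gT k n i j h 0 else 0)
        - (∑ j : Fin n, if h : j < i then gT k n j i h 0 else 0))
  | XYlt (i j : Fin n) (h : i < j) : GRel (⁅gX k n i, gY k n j⁆ + gT k n i j h 0)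
  | XYgt (i j : Fin n) (h : j < i) : GRel (⁅gX k n i, gY k n j⁆ + gT k n j i h 0)
  | XT (i j l : Fin n) (h : i < j) (h1 : l ≠ i) (h2 : l ≠ j) (α : ℕ) :
      GRel ⁅gX k n l, gT k n i j h α⁆
  | XTi (i j : Fin n) (h : i < j) (α : ℕ) :
      GRel (⁅gX k n i, gT k n i j h α⁆ - gT k n i j h (α + 1))
  | XTj (i j : Fin n) (h : i < j) (α : ℕ) :
      GRel (⁅gX k n j, gT k n i j h α⁆ + gT k n i j h (α + 1))
  | TT (i j l m : Fin n) (hij : i < j) (hlm : l < m) (hil : i < l)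
      (d1 : j ≠ l) (d2 : j ≠ m) (α β : ℕ) :
      GRel ⁅gT k n i j hij α, gT k n l m hlm β⁆
  | TTadj (i j l : Fin n) (hij : i < j) (hjl : j < l) (α β : ℕ) :
      GRel (⁅gT k n i j hij α, gT k n j l hjl β⁆
        + ∑ γ ∈ Finset.range (α + β + 1), (Nat.choose α γ : k) •
            ⁅gT k n i j hij γ, gT k n i l (hij.trans hjl) (α + β - γ)⁆)
  | TTadj' (i j l : Fin n) (hij : i < j) (hjl : j < l) (α β : ℕ) :
      GRel (⁅gT k n i l (hij.trans hjl) α, gT k n j l hjl β⁆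
        + ∑ γ ∈ Finset.range (α + β + 1),
            ((-1 : k) ^ (β + 1) * (Nat.choose α (α + β - γ) : k)) •
            ⁅gT k n i j hij γ, gT k n i l (hij.trans hjl) (α + β - γ)⁆)
  | YTlt (i j l : Fin n) (hij : i < j) (hli : l < i) (α : ℕ) :
      GRel (⁅gY k n l, gT k n i j hij α⁆
        + ∑ γ ∈ Finset.range α, ((-1 : k) ^ γ) •
            ⁅gT k n l i hli γ, gT k n l j (hli.trans hij) (α - 1 - γ)⁆)
  | YTmid (i j l : Fin n) (hil : i < l) (hlj : l < j) (α : ℕ) :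
      GRel (⁅gY k n l, gT k n i j (hil.trans hlj) α⁆
        - ∑ γ ∈ Finset.range α, (Nat.choose α (α - 1 - γ) : k) •
            ⁅gT k n i l hil γ, gT k n i j (hil.trans hlj) (α - 1 - γ)⁆)
  | YTgt (i j l : Fin n) (hij : i < j) (hjl : j < l) (α : ℕ) :
      GRel (⁅gY k n l, gT k n i j hij α⁆
        + ∑ γ ∈ Finset.range α, (Nat.choose α γ : k) •
            ⁅gT k n i j hij γ, gT k n i l (hij.trans hjl) (α - 1 - γ)⁆)
  | YYT (i j : Fin n) (hij : i < j) (α : ℕ) :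
      GRel (⁅gY k n i + gY k n j, gT k n i j hij α⁆
        + (∑ l : Fin n, if h : i < l ∧ l < j then
            ∑ γ ∈ Finset.range α, (Nat.choose α (α - 1 - γ) : k) •
              ⁅gT k n i l h.1 γ, gT k n i j hij (α - 1 - γ)⁆ else 0)
        - (∑ l : Fin n, if h : j < l then
            ∑ γ ∈ Finset.range α, (Nat.choose α γ : k) •
              ⁅gT k n i j hij γ, gT k n i l (hij.trans h) (α - 1 - γ)⁆ else 0)
        + (∑ l : Fin n, if h : l < i then
            ∑ γ ∈ Finset.range α, ((-1 : k) ^ (γ + 1)) •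
              ⁅gT k n l i h γ, gT k n l j (h.trans hij) (α - 1 - γ)⁆ else 0))

/-- The Lie ideal of relations of `𝔊`. -/
abbrev gIdeal : LieIdeal k (FG k n) :=
  LieSubmodule.lieSpan k (FG k n) {a | GRel k n a}

/-- The Lie algebra `𝔊`. -/
abbrev GLie : Type := FG k n ⧸ gIdeal k n

/-- The generator `X i` of `𝔊`. -/
def GXe (i : Fin n) : GLie k n := LieSubmodule.Quotient.mk (N := gIdeal k n) (gX k n i)

/-- The generator `Y i` of `𝔊`. -/
def GYe (i : Fin n) : GLie k n := LieSubmodule.Quotient.mk (N := gIdeal k n) (gY k n i)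

/-- The generator `T i j α` (for `i < j`) of `𝔊`. -/
def GTe (i j : Fin n) (h : i < j) (α : ℕ) : GLie k n :=
  LieSubmodule.Quotient.mk (N := gIdeal k n) (gT k n i j h α)

/-!
On generators the morphism is prescribed, so uniqueness is clear and the content is that `x_i`,
`y_i` and `-u_{ij}^α`, where `u_{ij}^α = (ad x_i)^α t_{ij}`, satisfy the relations of `𝔊`.
For `l ≠ i, j` the element `x_l` commutes with `x_i` and `t_{ij}`, hence with every `u_{ij}^α`;
and since `ad x_j = -ad x_i` on `t_{ij}`, also `u_{ij}^α = (ad (-x_j))^α t_{ij}`. Bracketing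
`t_{ij}` with `[x_l, y_l] = -∑_m t_{lm}` gives `[t_{ij}, t_{jl} + t_{il}] = 0`, and applying
`(ad (-x_l))^β` gives the same for `u_{jl}^β + u_{il}^β`. The binomial relations then follow
from the Leibniz rule for `(ad x_i)^α` and from its variant
`[y, (ad x)^α a] = ∑_γ C(α,γ) [(ad x)^γ a, (ad x)^(α-1-γ) [x, y]]` for `[y, a] = 0`; the last
relation holds because `∑_l y_l` commutes with `x_i` and with `t_{ij}`.
-/

section General

open Finset LieAlgebra

variable {R L L' : Type*} [CommRing R] [LieRing L] [LieAlgebra R L] [LieRing L'] [LieAlgebra R L']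

theorem Finset.sum_range_succ_choose_nsmul {M : Type*} [AddCommMonoid M] (f : ℕ → M) (α : ℕ) :
    ∑ γ ∈ range (α + 1), (α + 1).choose γ • f γ
      = f α + ∑ γ ∈ range α, α.choose γ • (f γ + f (γ + 1)) := by
  have h := (sum_range_succ' (fun γ => α.choose γ • f γ) α).symm.trans (sum_range_succ _ α)
  simp only [Nat.choose_zero_right, Nat.choose_self, one_smul] at h
  rw [sum_range_succ', Nat.choose_zero_right, one_smul]
  simp only [Nat.choose_succ_succ, add_smul, sum_add_distrib, smul_add]
  rw [add_assoc, h]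
  abel

theorem lie_lie_eq_zero_of_lie_eq_zero {x y z : L} (hx : ⁅x, z⁆ = 0) (hy : ⁅y, z⁆ = 0) :
    ⁅⁅x, y⁆, z⁆ = 0 := by
  rw [lie_lie, hx, hy, lie_zero, lie_zero, sub_zero]

theorem LieAlgebra.commute_ad_of_lie_eq_zero {x y : L} (h : ⁅x, y⁆ = 0) :
    Commute (ad R L x) (ad R L y) :=
  LinearMap.ext fun z => by simp [leibniz_lie x y z, h]

theorem LieAlgebra.lie_ad_pow_of_lie_eq_zero {x y : L} (h : ⁅x, y⁆ = 0) (α : ℕ) (z : L) :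
    ⁅y, (ad R L x ^ α) z⁆ = (ad R L x ^ α) ⁅y, z⁆ :=
  LinearMap.congr_fun ((commute_ad_of_lie_eq_zero h).symm.pow_right α).eq z

theorem LieAlgebra.ad_pow_lie_of_lie_eq_zero {x z : L} (h : ⁅x, z⁆ = 0) (α : ℕ) (w : L) :
    ⁅(ad R L x ^ α) w, z⁆ = (ad R L x ^ α) ⁅w, z⁆ := by
  rw [← lie_skew, lie_ad_pow_of_lie_eq_zero h, ← map_neg, lie_skew]

theorem LieAlgebra.lie_ad_pow_eq_sum_choose {x y a : L} (h : ⁅y, a⁆ = 0) (α : ℕ) :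
    ⁅y, (ad R L x ^ α) a⁆ = ∑ γ ∈ range α,
      α.choose γ • ⁅(ad R L x ^ γ) a, (ad R L x ^ (α - 1 - γ)) ⁅x, y⁆⁆ := by
  induction α with
  | zero => simpa using h
  | succ α ih =>
    rw [sum_range_succ_choose_nsmul, pow_succ', Module.End.mul_apply, ad_apply, leibniz_lie, ih,
      ← lie_skew y x, neg_lie, ← lie_skew, neg_neg, lie_sum, Nat.add_sub_cancel, Nat.sub_self,
      pow_zero, Module.End.one_apply]
    congr 1
    refine sum_congr rfl fun γ hγ => ?_
    have hγ : α - γ = α - 1 - γ + 1 := by have := mem_range.mp hγ; omega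
    rw [lie_nsmul, leibniz_lie, add_comm, hγ, show α - (γ + 1) = α - 1 - γ by omega, pow_succ',
      pow_succ']
    rfl

def LieIdeal.mkQ (I : LieIdeal R L) : L →ₗ⁅R⁆ L ⧸ I :=
  { I.toSubmodule.mkQ with map_lie' := rfl }

theorem LieIdeal.mkQ_apply (I : LieIdeal R L) (x : L) : I.mkQ x = LieSubmodule.Quotient.mk x :=
  rfl

def LieIdeal.liftQ (I : LieIdeal R L) (f : L →ₗ⁅R⁆ L') (h : I ≤ f.ker) : L ⧸ I →ₗ⁅R⁆ L' :=
  { I.toSubmodule.liftQ f.toLinearMap fun _ hx => LieHom.mem_ker.mp (h hx) with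
    map_lie' := by
      rintro ⟨x⟩ ⟨y⟩
      exact f.map_lie x y }

@[simp]
theorem LieIdeal.liftQ_mk (I : LieIdeal R L) (f : L →ₗ⁅R⁆ L') (h : I ≤ f.ker) (x : L) :
    I.liftQ f h (LieSubmodule.Quotient.mk x) = f x :=
  rfl

theorem LieIdeal.lieHom_ext {I : LieIdeal R L} {f g : L ⧸ I →ₗ⁅R⁆ L'}
    (h : f.comp I.mkQ = g.comp I.mkQ) : f = g := by
  ext ⟨x⟩
  exact LieHom.congr_fun h x

theorem FreeLieAlgebra.existsUnique_lieHom_quotient_lieSpan {X : Type*}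
    (S : Set (FreeLieAlgebra R X)) (f : X → L') (hS : ∀ s ∈ S, lift R f s = 0) :
    ∃! ψ : FreeLieAlgebra R X ⧸ LieSubmodule.lieSpan R (FreeLieAlgebra R X) S →ₗ⁅R⁆ L',
      ∀ x, ψ (LieSubmodule.Quotient.mk (of R x)) = f x := by
  refine ⟨LieIdeal.liftQ _ (lift R f) (LieSubmodule.lieSpan_le.mpr hS), fun x => ?_, ?_⟩
  · simp
  · intro ψ hψ
    refine LieIdeal.lieHom_ext (hom_ext fun x => ?_)
    simp [LieIdeal.mkQ_apply, hψ]

end General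

section EllipticBraid

open Finset LieAlgebra

variable {K : Type} [Field K]
variable {n}

@[simp]
theorem tIdeal_mkQ_fx (i : Fin n) : (tIdeal K n).mkQ (fx K n i) = tx K n i :=
  rfl

@[simp]
theorem tIdeal_mkQ_fy (i : Fin n) : (tIdeal K n).mkQ (fy K n i) = ty K n i :=
  rfl

@[simp]
theorem tIdeal_mkQ_ft {i j : Fin n} (h : i ≠ j) :
    (tIdeal K n).mkQ (ft K n i j h) = tt K n i j h :=
  rfl

theorem tIdeal_mkQ_eq_zero {z : FT K n} (h : TRel K n z) : (tIdeal K n).mkQ z = 0 :=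
  LieSubmodule.Quotient.mk_eq_zero'.mpr (LieSubmodule.subset_lieSpan h)

theorem tx_lie_tx (i j : Fin n) : ⁅tx K n i, tx K n j⁆ = 0 := by
  simpa using tIdeal_mkQ_eq_zero (K := K) (TRel.xx i j)

theorem ty_lie_ty (i j : Fin n) : ⁅ty K n i, ty K n j⁆ = 0 := by
  simpa using tIdeal_mkQ_eq_zero (K := K) (TRel.yy i j)

theorem tx_lie_ty {i j : Fin n} (h : i ≠ j) : ⁅tx K n i, ty K n j⁆ = tt K n i j h := by
  simpa [sub_eq_zero] using tIdeal_mkQ_eq_zero (K := K) (TRel.xy i j h)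

theorem tx_lie_ty_self_add_sum (i : Fin n) :
    ⁅tx K n i, ty K n i⁆ + ∑ j, (if h : i ≠ j then tt K n i j h else 0) = 0 := by
  simpa only [map_add, LieHom.map_lie, map_sum, apply_dite, map_zero, tIdeal_mkQ_fx,
    tIdeal_mkQ_fy, tIdeal_mkQ_ft] using tIdeal_mkQ_eq_zero (K := K) (TRel.xyDiag i)

theorem tx_lie_tt_of_ne {i j l : Fin n} (h : i ≠ j) (hli : l ≠ i) (hlj : l ≠ j) :
    ⁅tx K n l, tt K n i j h⁆ = 0 := by
  simpa using tIdeal_mkQ_eq_zero (K := K) (TRel.xt i j l h hli hlj)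

theorem ty_lie_tt_of_ne {i j l : Fin n} (h : i ≠ j) (hli : l ≠ i) (hlj : l ≠ j) :
    ⁅ty K n l, tt K n i j h⁆ = 0 := by
  simpa using tIdeal_mkQ_eq_zero (K := K) (TRel.yt i j l h hli hlj)

theorem tx_lie_tt_right {i j : Fin n} (h : i ≠ j) :
    ⁅tx K n j, tt K n i j h⁆ = -⁅tx K n i, tt K n i j h⁆ :=
  eq_neg_of_add_eq_zero_right
    (by simpa [add_lie] using tIdeal_mkQ_eq_zero (K := K) (TRel.xxt i j h))

theorem ty_add_ty_lie_tt {i j : Fin n} (h : i ≠ j) :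
    ⁅ty K n i + ty K n j, tt K n i j h⁆ = 0 := by
  simpa using tIdeal_mkQ_eq_zero (K := K) (TRel.yyt i j h)

theorem tt_symm {i j : Fin n} (h : i ≠ j) : tt K n j i h.symm = tt K n i j h := by
  simpa [sub_eq_zero, eq_comm] using tIdeal_mkQ_eq_zero (K := K) (TRel.tsymm i j h)

theorem tx_lie_ty_self (i : Fin n) : ⁅tx K n i, ty K n i⁆
    = (∑ j, if h : i < j then -tt K n i j h.ne else 0)
      + ∑ j, if h : j < i then -tt K n j i h.ne else 0 := by
  rw [eq_neg_of_add_eq_zero_left (tx_lie_ty_self_add_sum i), ← sum_add_distrib,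
    ← sum_neg_distrib]
  refine sum_congr rfl fun j _ => ?_
  rcases lt_trichotomy i j with h | rfl | h
  · simp [h, h.ne, h.not_gt]
  · simp
  · simp [h, h.ne', h.not_gt, tt_symm h.ne]

theorem tt_lie_tt_of_disjoint {i j l m : Fin n} (hij : i ≠ j) (hlm : l ≠ m) (hli : l ≠ i)
    (hlj : l ≠ j) (hmi : m ≠ i) (hmj : m ≠ j) : ⁅tt K n l m hlm, tt K n i j hij⁆ = 0 := by
  rw [← tx_lie_ty hlm]
  exact lie_lie_eq_zero_of_lie_eq_zero (tx_lie_tt_of_ne hij hli hlj) (ty_lie_tt_of_ne hij hmi hmj)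

theorem tt_lie_tt_eq_neg {i j l : Fin n} (hij : i ≠ j) (hjl : j ≠ l) (hil : i ≠ l) :
    ⁅tt K n i j hij, tt K n j l hjl⁆ = -⁅tt K n i j hij, tt K n i l hil⁆ := by
  have h : ⁅⁅tx K n l, ty K n l⁆, tt K n i j hij⁆ = 0 :=
    lie_lie_eq_zero_of_lie_eq_zero (tx_lie_tt_of_ne hij hil.symm hjl.symm)
      (ty_lie_tt_of_ne hij hil.symm hjl.symm)
  have hsum : ∑ m, ⁅(if h : l ≠ m then tt K n l m h else 0), tt K n i j hij⁆
      = ⁅tt K n l i hil.symm, tt K n i j hij⁆ + ⁅tt K n l j hjl.symm, tt K n i j hij⁆ := by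
    rw [Fintype.sum_eq_add i j hij fun m ⟨hmi, hmj⟩ => ?_, dif_pos hil.symm, dif_pos hjl.symm]
    by_cases hlm : l = m
    · simp [hlm]
    · rw [dif_pos hlm, tt_lie_tt_of_disjoint hij hlm hil.symm hjl.symm hmi hmj]
  rw [eq_neg_of_add_eq_zero_left (tx_lie_ty_self_add_sum l), neg_lie, neg_eq_zero, sum_lie,
    hsum, tt_symm hil, tt_symm hjl, ← lie_skew (tt K n i l hil), ← lie_skew (tt K n j l hjl),
    ← neg_add, neg_eq_zero] at h
  exact eq_neg_of_add_eq_zero_right h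

theorem tx_lie_sum_ty (i : Fin n) : ⁅tx K n i, ∑ l, ty K n l⁆ = 0 := by
  have h : ∀ l, ⁅tx K n i, ty K n l⁆
      = (if l = i then ⁅tx K n i, ty K n i⁆ else 0) + if h : i ≠ l then tt K n i l h else 0 := by
    intro l
    by_cases hl : l = i
    · subst hl
      simp
    · simp [hl, Ne.symm hl, tx_lie_ty]
  rw [lie_sum, sum_congr rfl fun l _ => h l, sum_add_distrib, sum_ite_eq', if_pos (mem_univ i)]
  exact tx_lie_ty_self_add_sum i

theorem sum_ty_lie_tt {i j : Fin n} (h : i ≠ j) : ⁅∑ l, ty K n l, tt K n i j h⁆ = 0 := by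
  rw [sum_lie, Fintype.sum_eq_add i j h fun l ⟨hli, hlj⟩ => ty_lie_tt_of_ne h hli hlj, ← add_lie]
  exact ty_add_ty_lie_tt h

variable (K) in
def adPowT {i j : Fin n} (h : i ≠ j) (α : ℕ) : T1 K n :=
  (ad K (T1 K n) (tx K n i) ^ α) (tt K n i j h)

theorem adPowT_zero {i j : Fin n} (h : i ≠ j) : adPowT K h 0 = tt K n i j h := by
  simp [adPowT]

theorem adPowT_succ {i j : Fin n} (h : i ≠ j) (α : ℕ) :
    adPowT K h (α + 1) = ⁅tx K n i, adPowT K h α⁆ := by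
  rw [adPowT, pow_succ', Module.End.mul_apply]
  rfl

theorem ad_pow_adPowT {i j : Fin n} (h : i ≠ j) (α β : ℕ) :
    (ad K (T1 K n) (tx K n i) ^ α) (adPowT K h β) = adPowT K h (α + β) := by
  rw [adPowT, adPowT, pow_add, Module.End.mul_apply]

theorem tx_lie_adPowT_of_ne {i j l : Fin n} (h : i ≠ j) (hli : l ≠ i) (hlj : l ≠ j) (α : ℕ) :
    ⁅tx K n l, adPowT K h α⁆ = 0 := by
  rw [adPowT, lie_ad_pow_of_lie_eq_zero (tx_lie_tx i l), tx_lie_tt_of_ne h hli hlj, map_zero]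

theorem tx_lie_adPowT_right {i j : Fin n} (h : i ≠ j) (α : ℕ) :
    ⁅tx K n j, adPowT K h α⁆ = -adPowT K h (α + 1) := by
  rw [adPowT, lie_ad_pow_of_lie_eq_zero (tx_lie_tx i j), tx_lie_tt_right, map_neg, adPowT,
    pow_succ, Module.End.mul_apply]
  rfl

theorem adPowT_eq_ad_neg_pow {i j : Fin n} (h : i ≠ j) (α : ℕ) :
    adPowT K h α = (ad K (T1 K n) (-tx K n j) ^ α) (tt K n i j h) := by
  induction α with
  | zero => exact adPowT_zero h
  | succ α ih =>
    rw [pow_succ', Module.End.mul_apply, ← ih, ad_apply, neg_lie, tx_lie_adPowT_right, neg_neg]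

theorem adPowT_symm {i j : Fin n} (h : i ≠ j) (α : ℕ) :
    adPowT K h.symm α = (-1 : K) ^ α • adPowT K h α := by
  induction α with
  | zero => rw [adPowT_zero, adPowT_zero, pow_zero, one_smul, tt_symm]
  | succ α ih =>
    rw [adPowT_succ, ih, lie_smul, tx_lie_adPowT_right, pow_succ, mul_smul, neg_one_smul,
      smul_neg]

theorem adPowT_lie_adPowT_of_disjoint {i j l m : Fin n} (hij : i ≠ j) (hlm : l ≠ m)
    (hli : l ≠ i) (hlj : l ≠ j) (hmi : m ≠ i) (hmj : m ≠ j) (α β : ℕ) :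
    ⁅adPowT K hij α, adPowT K hlm β⁆ = 0 := by
  rw [adPowT, ad_pow_lie_of_lie_eq_zero (tx_lie_adPowT_of_ne hlm hli.symm hmi.symm β), adPowT,
    lie_ad_pow_of_lie_eq_zero (tx_lie_tt_of_ne hij hli hlj), ← lie_skew,
    tt_lie_tt_of_disjoint hij hlm hli hlj hmi hmj, neg_zero, map_zero, map_zero]

theorem tt_lie_adPowT_eq_neg {i j l : Fin n} (hij : i ≠ j) (hjl : j ≠ l) (hil : i ≠ l)
    (β : ℕ) : ⁅tt K n i j hij, adPowT K hjl β⁆ = -⁅tt K n i j hij, adPowT K hil β⁆ := by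
  -- both sides are `(ad (-x_l))^β` applied to the case `β = 0`
  have h : ⁅-tx K n l, tt K n i j hij⁆ = 0 := by
    rw [neg_lie, tx_lie_tt_of_ne hij hil.symm hjl.symm, neg_zero]
  rw [adPowT_eq_ad_neg_pow, adPowT_eq_ad_neg_pow, lie_ad_pow_of_lie_eq_zero h,
    lie_ad_pow_of_lie_eq_zero h, tt_lie_tt_eq_neg hij hjl hil, map_neg]

theorem adPowT_lie_adPowT_eq_neg_sum {i j l : Fin n} (hij : i ≠ j) (hjl : j ≠ l) (hil : i ≠ l)
    (α β : ℕ) : ⁅adPowT K hij α, adPowT K hjl β⁆ = -∑ γ ∈ range (α + β + 1),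
      (α.choose γ : K) • ⁅adPowT K hij γ, adPowT K hil (α + β - γ)⁆ := by
  have hsum : ∑ γ ∈ range (α + β + 1),
      (α.choose γ : K) • ⁅adPowT K hij γ, adPowT K hil (α + β - γ)⁆
      = ∑ γ ∈ range (α + 1), α.choose γ • ⁅adPowT K hij γ, adPowT K hil (α - γ + β)⁆ := by
    rw [← sum_subset (range_subset_range.mpr (by omega : α + 1 ≤ α + β + 1))]
    · refine sum_congr rfl fun γ hγ => ?_
      rw [Nat.cast_smul_eq_nsmul, show α - γ + β = α + β - γ by have := mem_range.mp hγ; omega]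
    · intro γ _ hγ
      rw [Nat.choose_eq_zero_of_lt (by simpa using hγ), Nat.cast_zero, zero_smul]
  calc ⁅adPowT K hij α, adPowT K hjl β⁆
      = (ad K _ (tx K n i) ^ α) ⁅tt K n i j hij, adPowT K hjl β⁆ :=
        ad_pow_lie_of_lie_eq_zero (tx_lie_adPowT_of_ne hjl hij hil β) α _
    _ = -(ad K _ (tx K n i) ^ α) ⁅tt K n i j hij, adPowT K hil β⁆ := by
        rw [tt_lie_adPowT_eq_neg hij hjl hil, map_neg]
    _ = _ := by
        rw [ad_pow_lie, Nat.sum_antidiagonal_eq_sum_range_succ (fun p q => α.choose p •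
          ⁅(ad K _ (tx K n i) ^ p) (tt K n i j hij), (ad K _ (tx K n i) ^ q) (adPowT K hil β)⁆),
          hsum]
        simp only [ad_pow_adPowT]
        rfl

theorem adPowT_lie_adPowT_eq_smul_sum {i j l : Fin n} (hij : i ≠ j) (hjl : j ≠ l)
    (hil : i ≠ l) (α β : ℕ) : ⁅adPowT K hil α, adPowT K hjl β⁆ = (-1 : K) ^ β •
      ∑ γ ∈ range (α + β + 1),
        (α.choose (α + β - γ) : K) • ⁅adPowT K hij γ, adPowT K hil (α + β - γ)⁆ := by
  rw [adPowT_symm hjl.symm, lie_smul, adPowT_lie_adPowT_eq_neg_sum hil hjl.symm hij,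
    ← sum_range_reflect, ← sum_neg_distrib]
  congr 1
  refine sum_congr rfl fun γ hγ => ?_
  rw [show α + β + 1 - 1 - γ = α + β - γ by omega,
    show α + β - (α + β - γ) = γ by have := mem_range.mp hγ; omega, ← lie_skew, smul_neg, neg_neg]

theorem ty_lie_adPowT_eq_sum {i j l : Fin n} (hij : i ≠ j) (hil : i ≠ l) (hlj : l ≠ j)
    (α : ℕ) : ⁅ty K n l, adPowT K hij α⁆ = ∑ γ ∈ range α,
      (α.choose γ : K) • ⁅adPowT K hij γ, adPowT K hil (α - 1 - γ)⁆ := by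
  rw [adPowT, lie_ad_pow_eq_sum_choose (ty_lie_tt_of_ne hij hil.symm hlj), tx_lie_ty hil]
  simp only [Nat.cast_smul_eq_nsmul]
  rfl

theorem ty_lie_adPowT_eq_neg_sum {i j l : Fin n} (hij : i ≠ j) (hil : i ≠ l) (hlj : l ≠ j)
    (α : ℕ) : ⁅ty K n l, adPowT K hij α⁆ = -∑ γ ∈ range α,
      (α.choose (α - 1 - γ) : K) • ⁅adPowT K hil γ, adPowT K hij (α - 1 - γ)⁆ := by
  rw [ty_lie_adPowT_eq_sum hij hil hlj, ← sum_range_reflect, ← sum_neg_distrib]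
  refine sum_congr rfl fun γ hγ => ?_
  rw [show α - 1 - (α - 1 - γ) = γ by have := mem_range.mp hγ; omega, ← lie_skew, smul_neg]

theorem ty_lie_adPowT_eq_sum_neg_one_pow {i j l : Fin n} (hij : i ≠ j) (hli : l ≠ i)
    (hlj : l ≠ j) (α : ℕ) : ⁅ty K n l, adPowT K hij α⁆ = ∑ γ ∈ range α,
      (-1 : K) ^ γ • ⁅adPowT K hli γ, adPowT K hlj (α - 1 - γ)⁆ := by
  induction α with
  | zero => simp [adPowT_zero, ty_lie_tt_of_ne hij hli hlj]
  | succ α ih =>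
    have hstep : ⁅⁅ty K n l, tx K n i⁆, adPowT K hij α⁆ = ⁅adPowT K hli 0, adPowT K hlj α⁆ := by
      rw [← lie_skew (ty K n l), tx_lie_ty hli.symm, tt_symm hli, neg_lie,
        tt_lie_adPowT_eq_neg hli hij hlj, neg_neg, adPowT_zero]
    rw [adPowT_succ, leibniz_lie, hstep, ih, lie_sum, sum_range_succ', add_comm]
    congr 1
    · refine sum_congr rfl fun γ _ => ?_
      rw [lie_smul, leibniz_lie, tx_lie_adPowT_right, tx_lie_adPowT_of_ne hlj hli.symm hij,
        lie_zero, add_zero, neg_lie, pow_succ, mul_comm, mul_smul, neg_one_smul, smul_neg,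
        show α + 1 - 1 - (γ + 1) = α - 1 - γ by omega]
    · simp

theorem sum_ty_lie_adPowT {i j : Fin n} (h : i ≠ j) (α : ℕ) :
    ∑ l, ⁅ty K n l, adPowT K h α⁆ = 0 := by
  rw [← sum_lie, adPowT, lie_ad_pow_of_lie_eq_zero (tx_lie_sum_ty i), sum_ty_lie_tt, map_zero]

theorem ty_add_ty_lie_adPowT_eq_neg_sum_sdiff {i j : Fin n} (h : i ≠ j) (α : ℕ) :
    ⁅ty K n i + ty K n j, adPowT K h α⁆ = -∑ l ∈ univ \ {i, j}, ⁅ty K n l, adPowT K h α⁆ := by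
  rw [add_lie, ← sum_pair h (f := fun l => ⁅ty K n l, adPowT K h α⁆), eq_neg_iff_add_eq_zero,
    add_comm, sum_sdiff (subset_univ _), sum_ty_lie_adPowT]

theorem ty_add_ty_lie_adPowT_eq_sum {i j : Fin n} (hij : i < j) (α : ℕ) :
    ⁅ty K n i + ty K n j, adPowT K hij.ne α⁆
      = (∑ l, if h : i < l ∧ l < j then ∑ γ ∈ range α, (α.choose (α - 1 - γ) : K) •
            ⁅adPowT K h.1.ne γ, adPowT K hij.ne (α - 1 - γ)⁆ else 0)
        - (∑ l, if h : j < l then ∑ γ ∈ range α, (α.choose γ : K) •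
            ⁅adPowT K hij.ne γ, adPowT K (hij.trans h).ne (α - 1 - γ)⁆ else 0)
        + ∑ l, if h : l < i then ∑ γ ∈ range α, (-1 : K) ^ (γ + 1) •
            ⁅adPowT K h.ne γ, adPowT K (h.trans hij).ne (α - 1 - γ)⁆ else 0 := by
  rw [ty_add_ty_lie_adPowT_eq_neg_sum_sdiff hij.ne, ← sum_sub_distrib, ← sum_add_distrib,
    sdiff_eq_filter, sum_filter, ← sum_neg_distrib]
  refine sum_congr rfl fun l _ => ?_
  rcases lt_trichotomy l i with hli | rfl | hil
  · have hlj := hli.trans hij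
    rw [if_pos (by simp [hli.ne, hlj.ne]), dif_neg (fun h => lt_asymm hli h.1),
      dif_neg (lt_asymm hlj), dif_pos hli, ty_lie_adPowT_eq_sum_neg_one_pow hij.ne hli.ne hlj.ne,
      sub_zero, zero_add, ← sum_neg_distrib]
    exact sum_congr rfl fun γ _ => by rw [pow_succ, mul_neg_one, neg_smul]
  · simp [hij.not_gt]
  · rcases lt_trichotomy l j with hlj | rfl | hjl
    · rw [if_pos (by simp [hil.ne', hlj.ne]), dif_pos ⟨hil, hlj⟩, dif_neg (lt_asymm hlj),
        dif_neg (lt_asymm hil), ty_lie_adPowT_eq_neg_sum hij.ne hil.ne hlj.ne, neg_neg, sub_zero,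
        add_zero]
    · simp [hil.not_gt]
    · rw [if_pos (by simp [hil.ne', hjl.ne']), dif_neg (fun h => lt_asymm hjl h.2), dif_pos hjl,
        dif_neg (lt_asymm hil), ty_lie_adPowT_eq_sum hij.ne (hij.trans hjl).ne hjl.ne', zero_sub,
        add_zero]

variable (K) in
def GGen.toT1 : GGen n → T1 K n
  | .X i => tx K n i
  | .Y i => ty K n i
  | .T _ _ h α => -adPowT K h.ne α

theorem lift_toT1_gX (i : Fin n) :
    FreeLieAlgebra.lift K (GGen.toT1 K) (gX K n i) = tx K n i := by
  simp [gX, GGen.toT1]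

theorem lift_toT1_gY (i : Fin n) :
    FreeLieAlgebra.lift K (GGen.toT1 K) (gY K n i) = ty K n i := by
  simp [gY, GGen.toT1]

theorem lift_toT1_gT {i j : Fin n} (h : i < j) (α : ℕ) :
    FreeLieAlgebra.lift K (GGen.toT1 K) (gT K n i j h α) = -adPowT K h.ne α := by
  simp [gT, GGen.toT1]

theorem lift_toT1_eq_zero {z : FG K n} (hz : GRel K n z) :
    FreeLieAlgebra.lift K (GGen.toT1 K) z = 0 := by
  cases hz <;> simp only [map_add, map_sub, LieHom.map_lie, map_sum, map_smul, apply_dite,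
    map_zero, lift_toT1_gX, lift_toT1_gY, lift_toT1_gT, neg_lie, lie_neg, neg_neg]
  case XX i j => exact tx_lie_tx i j
  case YY i j => exact ty_lie_ty i j
  case XYdiag i => simp only [adPowT_zero, tx_lie_ty_self, add_sub_cancel_left, sub_self]
  case XYlt i j h => rw [adPowT_zero, tx_lie_ty h.ne, add_neg_cancel]
  case XYgt i j h => rw [adPowT_zero, tx_lie_ty h.ne', tt_symm h.ne, add_neg_cancel]
  case XT i j l h hli hlj α => rw [tx_lie_adPowT_of_ne h.ne hli hlj, neg_zero]
  case XTi i j h α => rw [← adPowT_succ, sub_neg_eq_add, neg_add_cancel]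
  case XTj i j h α => rw [tx_lie_adPowT_right, neg_neg, add_neg_cancel]
  case TT i j l m hij hlm hil hjl hjm α β =>
    exact adPowT_lie_adPowT_of_disjoint hij.ne hlm.ne hil.ne' hjl.symm (hil.trans hlm).ne'
      hjm.symm α β
  case TTadj i j l hij hjl α β =>
    rw [adPowT_lie_adPowT_eq_neg_sum hij.ne hjl.ne (hij.trans hjl).ne, neg_add_cancel]
  case TTadj' i j l hij hjl α β =>
    simp only [adPowT_lie_adPowT_eq_smul_sum hij.ne hjl.ne (hij.trans hjl).ne, smul_sum,
      mul_smul, pow_succ, mul_neg_one, neg_smul, sum_neg_distrib, add_neg_cancel]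
  case YTlt i j l hij hli α =>
    rw [ty_lie_adPowT_eq_sum_neg_one_pow hij.ne hli.ne (hli.trans hij).ne, neg_add_cancel]
  case YTmid i j l hil hlj α =>
    rw [ty_lie_adPowT_eq_neg_sum (hil.trans hlj).ne hil.ne hlj.ne, neg_neg, sub_self]
  case YTgt i j l hij hjl α =>
    rw [ty_lie_adPowT_eq_sum hij.ne (hij.trans hjl).ne hjl.ne', neg_add_cancel]
  case YYT i j hij α => rw [ty_add_ty_lie_adPowT_eq_sum hij α]; abel

end EllipticBraid

/-- there is a unique Lie algebra morphism `𝔊 → 𝔱_{1,n}` with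
`X_i ↦ x_i`, `Y_i ↦ y_i` and `T_{ij}^α ↦ −(ad x_i)^α(t_{ij})` for `i < j`, `α ≥ 0`. -/
theorem statement12 :
    ∃! ψ : GLie k n →ₗ⁅k⁆ T1 k n,
      (∀ i : Fin n, ψ (GXe k n i) = tx k n i) ∧
      (∀ i : Fin n, ψ (GYe k n i) = ty k n i) ∧
      (∀ (i j : Fin n) (h : i < j) (α : ℕ),
        ψ (GTe k n i j h α) = -((adT k n (tx k n i)) ^ α) (tt k n i j h.ne)) := by
  refine (existsUnique_congr fun ψ => ?_).mp
    (FreeLieAlgebra.existsUnique_lieHom_quotient_lieSpan _ (GGen.toT1 k) fun _ =>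
      lift_toT1_eq_zero)
  constructor
  · intro h
    exact ⟨fun i => h (.X i), fun i => h (.Y i), fun i j hij α => h (.T i j hij α)⟩
  · rintro ⟨hX, hY, hT⟩ (i | i | ⟨i, j, hij, α⟩)
    exacts [hX i, hY i, hT i j hij α]
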